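/- arXiv:1012.4889 — 4 statements merged into one kernel-verified Lean document; each statement's English description precedes it below -/
import Mathlib

section
/- Let x ∈ ℝⁿ, m ≥ 1, and suppose x* ∈ ℝⁿ satisfies |x_i − x*_i| ≤ err₂^m(x)/m^{1/2} for all i. Let x̂ be the m-sparse vector that agrees with x* on the m coordinates of largest |x*_i| and is zero elsewhere. Then err₂^m(x) ≤ ‖x − x̂‖₂ ≤ 10·err₂^m(x). -/
open Finset

/-- `err₂^m(x)`: the minimum of `‖x − y‖₂` over all `m`-sparse vectors `y`. -/
noncomputable def err2 (n m : ℕ) (x : Fin n → ℝ) : ℝ :=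
  sInf {e : ℝ | ∃ y : Fin n → ℝ,
    (Finset.univ.filter (fun i => y i ≠ 0)).card ≤ m ∧
      e = Real.sqrt (∑ i, (x i - y i) ^ 2)}

/-!
Let `T` be a set of at most `m` coordinates carrying the most `ℓ₂`-mass of `x`, so that
`∑_{i ∉ T} x_i² ≤ err²`, and put `δ = err/√m`. The error of `x̂` is the estimation error
on `H`, at most `m δ² = err²`, plus the mass of `x` off `H`. The part of it off `T` lies in
the tail. On `T \ H` the selection by `|x*|` can only misorder coordinates whose `|x|`
differ by at most `2δ`, so `x_i² ≤ 2 x_j² + 8δ²` for every `j ∈ H \ T`; since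
`|T \ H| ≤ |H \ T|`, the mass on `T \ H` is at most twice the tail plus `8 m δ²`.
Altogether `‖x - x̂‖² ≤ 11 err²`.
-/

theorem Finset.sum_le_sum_of_card_le_of_forall_le {ι M : Type*} [AddCommMonoid M]
    [LinearOrder M] [IsOrderedAddMonoid M] {s t : Finset ι} {f g : ι → M} (hst : #s ≤ #t)
    (hg : ∀ j ∈ t, 0 ≤ g j) (hfg : ∀ i ∈ s, ∀ j ∈ t, f i ≤ g j) :
    ∑ i ∈ s, f i ≤ ∑ j ∈ t, g j := by
  rcases t.eq_empty_or_nonempty with rfl | ht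
  · simp [card_eq_zero.mp (Nat.le_zero.mp hst)]
  set c := t.inf' ht g
  calc ∑ i ∈ s, f i ≤ #s • c := sum_le_card_nsmul _ _ _ fun i hi => le_inf' ht _ (hfg i hi)
    _ ≤ #t • c := nsmul_le_nsmul_left (le_inf' ht _ hg) hst
    _ ≤ ∑ j ∈ t, g j := card_nsmul_le_sum _ _ _ fun j hj => inf'_le _ hj

theorem Finset.sum_sdiff_add_sum_compl_sdiff {ι M : Type*} [Fintype ι] [DecidableEq ι]
    [AddCommMonoid M] (s t : Finset ι) (f : ι → M) :
    ∑ i ∈ s \ t, f i + ∑ i ∈ sᶜ \ t, f i = ∑ i ∈ tᶜ, f i := by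
  rw [← sum_inter_add_sum_sdiff tᶜ s]
  congr 1 <;> congr 1 <;> ext <;> simp [and_comm]

theorem sq_le_two_mul_sq_add_of_abs_sub_le {a a' b b' δ : ℝ} (ha : |a - a'| ≤ δ)
    (hb : |b - b'| ≤ δ) (h : |a'| ≤ |b'|) : a ^ 2 ≤ 2 * b ^ 2 + 8 * δ ^ 2 := by
  have hab : |a| ≤ |b| + 2 * δ := by
    have := abs_sub_abs_le_abs_sub a a'
    have := abs_sub_abs_le_abs_sub b' b
    rw [abs_sub_comm] at hb
    linarith
  have hδ : 0 ≤ δ := (abs_nonneg _).trans ha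
  calc a ^ 2 = |a| ^ 2 := (sq_abs a).symm
    _ ≤ (|b| + 2 * δ) ^ 2 := pow_le_pow_left₀ (abs_nonneg a) hab 2
    _ ≤ 2 * b ^ 2 + 8 * δ ^ 2 := by nlinarith [sq_nonneg (|b| - 2 * δ), sq_abs b]

theorem natCast_mul_div_sqrt_sq_le {k m : ℕ} (hkm : k ≤ m) (E : ℝ) :
    k * (E / √m) ^ 2 ≤ E ^ 2 := by
  rcases eq_or_ne m 0 with rfl | hm
  · simp [Nat.le_zero.mp hkm, sq_nonneg]
  calc (k : ℝ) * (E / √m) ^ 2 ≤ m * (E / √m) ^ 2 := by gcongr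
    _ = E ^ 2 := by
      rw [div_pow, Real.sq_sqrt (Nat.cast_nonneg m), mul_div_cancel₀ _ (by positivity)]

theorem sum_sq_sub_eq_of_eq_ite {ι : Type*} [Fintype ι] [DecidableEq ι] (x x' y : ι → ℝ)
    (s : Finset ι) (hy : ∀ i, y i = if i ∈ s then x' i else 0) :
    ∑ i, (x i - y i) ^ 2 = ∑ i ∈ s, (x i - x' i) ^ 2 + ∑ i ∈ sᶜ, x i ^ 2 := by
  rw [← sum_add_sum_compl s]
  congr 1 <;> refine sum_congr rfl fun i hi => ?_
  · simp [hy, hi]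
  · simp [hy, mem_compl.mp hi]

theorem sum_sq_le_sum_sq_sub_of_support_subset {ι : Type*} [Fintype ι] [DecidableEq ι]
    (x y : ι → ℝ) (S : Finset ι) (hS : ∀ i ∉ S, y i = 0) :
    ∑ i ∈ Sᶜ, x i ^ 2 ≤ ∑ i, (x i - y i) ^ 2 :=
  calc ∑ i ∈ Sᶜ, x i ^ 2 = ∑ i ∈ Sᶜ, (x i - y i) ^ 2 :=
        sum_congr rfl fun i hi => by rw [hS i (mem_compl.mp hi), sub_zero]
    _ ≤ ∑ i, (x i - y i) ^ 2 := sum_le_univ_sum_of_nonneg fun i => sq_nonneg _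

section err2

variable {n m : ℕ} {x : Fin n → ℝ}

theorem err2_nonneg : 0 ≤ err2 n m x :=
  Real.sInf_nonneg <| by rintro _ ⟨y, -, rfl⟩; positivity

theorem err2_le_of_card_support_le {y : Fin n → ℝ} (hy : #{i | y i ≠ 0} ≤ m) :
    err2 n m x ≤ √(∑ i, (x i - y i) ^ 2) :=
  csInf_le ⟨0, by rintro _ ⟨y, -, rfl⟩; positivity⟩ ⟨y, hy, rfl⟩

theorem le_err2_of_forall {c : ℝ}
    (h : ∀ y : Fin n → ℝ, #{i | y i ≠ 0} ≤ m → c ≤ √(∑ i, (x i - y i) ^ 2)) :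
    c ≤ err2 n m x :=
  le_csInf ⟨_, 0, by simp, rfl⟩ <| by rintro _ ⟨y, hy, rfl⟩; exact h y hy

theorem exists_card_le_sum_sq_compl_le_sq_err2 :
    ∃ T : Finset (Fin n), #T ≤ m ∧ ∑ i ∈ Tᶜ, x i ^ 2 ≤ err2 n m x ^ 2 := by
  obtain ⟨T, hT, hTmax⟩ := exists_max_image {s : Finset (Fin n) | #s ≤ m}
    (fun s => ∑ i ∈ s, x i ^ 2) ⟨∅, by simp⟩
  refine ⟨T, (mem_filter.mp hT).2, ?_⟩
  suffices √(∑ i ∈ Tᶜ, x i ^ 2) ≤ err2 n m x from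
    (Real.sqrt_le_left err2_nonneg).mp this
  refine le_err2_of_forall fun y hy => Real.sqrt_le_sqrt ?_
  set S : Finset (Fin n) := {i | y i ≠ 0}
  have hS : ∑ i ∈ S, x i ^ 2 ≤ ∑ i ∈ T, x i ^ 2 := hTmax S (by simpa using hy)
  have hSc := sum_sq_le_sum_sq_sub_of_support_subset x y S fun i hi => by
    simpa [S] using hi
  linarith [sum_add_sum_compl S (fun i => x i ^ 2), sum_add_sum_compl T (fun i => x i ^ 2)]

end err2

theorem count_sketch_sparse_approx_general (n m : ℕ)
    (x xs : Fin n → ℝ)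
    (hxs : ∀ i, |x i - xs i| ≤ err2 n m x / Real.sqrt m)
    (H : Finset (Fin n)) (hHcard : H.card = m)
    (hHtop : ∀ i ∈ H, ∀ j ∉ H, |xs j| ≤ |xs i|)
    (xhat : Fin n → ℝ) (hxhat : ∀ i, xhat i = if i ∈ H then xs i else 0) :
    err2 n m x ≤ Real.sqrt (∑ i, (x i - xhat i) ^ 2) ∧
      Real.sqrt (∑ i, (x i - xhat i) ^ 2) ≤ 10 * err2 n m x := by
  set E := err2 n m x
  set δ := E / √m
  have hxhat_supp : #{i | xhat i ≠ 0} ≤ m :=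
    hHcard ▸ card_le_card fun i hi => by by_contra h; simp_all
  refine ⟨err2_le_of_card_support_le hxhat_supp, ?_⟩
  obtain ⟨T, hTcard, hT⟩ := exists_card_le_sum_sq_compl_le_sq_err2 (x := x)
  have hH : ∑ i ∈ H, (x i - xs i) ^ 2 ≤ E ^ 2 :=
    (sum_le_card_nsmul _ _ _ fun i _ => sq_le_sq' (abs_le.mp (hxs i)).1 (abs_le.mp (hxs i)).2).trans
      <| by rw [nsmul_eq_mul]; exact natCast_mul_div_sqrt_sq_le hHcard.le E
  have hswap : ∑ i ∈ T \ H, x i ^ 2 ≤ ∑ j ∈ H \ T, (2 * x j ^ 2 + 8 * δ ^ 2) :=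
    sum_le_sum_of_card_le_of_forall_le (card_sdiff_le_card_sdiff_iff.mpr (hHcard ▸ hTcard))
      (fun j _ => by positivity) fun i hi j hj =>
        sq_le_two_mul_sq_add_of_abs_sub_le (hxs i) (hxs j)
          (hHtop j (mem_sdiff.mp hj).1 i (mem_sdiff.mp hi).2)
  have hδ : ∑ j ∈ H \ T, 8 * δ ^ 2 ≤ 8 * E ^ 2 := by
    rw [sum_const, nsmul_eq_mul, mul_left_comm]
    exact mul_le_mul_of_nonneg_left
      (natCast_mul_div_sqrt_sq_le (hHcard ▸ card_le_card sdiff_subset) E) (by norm_num)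
  have hTc := (sum_sdiff_add_sum_compl_sdiff H T fun i => x i ^ 2).trans_le hT
  rw [sum_add_distrib, ← mul_sum] at hswap
  rw [sum_sq_sub_eq_of_eq_ite x xs xhat H hxhat, ← sum_inter_add_sum_sdiff Hᶜ T,
    inter_comm, ← sdiff_eq_inter_compl]
  refine Real.sqrt_le_iff.mpr ⟨mul_nonneg (by norm_num) err2_nonneg, ?_⟩
  linarith [sq_nonneg E, sum_nonneg fun i (_ : i ∈ Hᶜ \ T) => sq_nonneg (x i)]

/-- If `x*` approximates `x` with per-coordinate error
`err₂^m(x)/√m`, and `x̂` agrees with `x*` on `m` coordinates of largest `|x*_i|`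
and is zero elsewhere, then `err₂^m(x) ≤ ‖x − x̂‖₂ ≤ 10·err₂^m(x)`. -/
theorem count_sketch_sparse_approx (n m : ℕ) (hm : 1 ≤ m) (hmn : m ≤ n)
    (x xs : Fin n → ℝ)
    (hxs : ∀ i, |x i - xs i| ≤ err2 n m x / Real.sqrt m)
    (H : Finset (Fin n)) (hHcard : H.card = m)
    (hHtop : ∀ i ∈ H, ∀ j ∉ H, |xs j| ≤ |xs i|)
    (xhat : Fin n → ℝ) (hxhat : ∀ i, xhat i = if i ∈ H then xs i else 0) :
    err2 n m x ≤ Real.sqrt (∑ i, (x i - xhat i) ^ 2) ∧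
      Real.sqrt (∑ i, (x i - xhat i) ^ 2) ≤ 10 * err2 n m x :=
  count_sketch_sparse_approx_general n m x xs hxs H hHcard hHtop xhat hxhat
end

section
/- Let S, T ⊆ [2n] with |S| = |T| = n, and suppose there exist i ∈ S ∩ T and j ∈ [2n] with j ∉ S ∩ T. If P is a uniformly random subset of [2n] of size n, then P[|S ∩ P| + |T ∩ P| ≥ n + 1] > 1/8. -/
/-!
Condition on `i ∈ P` and `j ∉ P`: such `P` are `insert i Q` with `Q` an `(n-1)`-subset of
`U = [2n] \ {i, j}`, and `insert i Q`, `insert i (U \ Q)` meet in `i` and cover everything but `j`.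
Since `j` misses `S` or `T`, their two scores `|S ∩ P| + |T ∩ P|` add up to at least `2n + 1`,
so one of them is good. Pairing `Q` with `U \ Q` shows that at least half of the
`C(2n-2, n-1)` sets `Q` give a good `P`, and `C(2n, n) < 4 C(2n-2, n-1)`.
-/

open Finset

namespace Nat

theorem centralBinom_succ_lt_four_mul (m : ℕ) : (m + 1).centralBinom < 4 * m.centralBinom := by
  have h := succ_mul_centralBinom_succ m
  have hpos := centralBinom_pos m
  nlinarith

end Nat

section

variable {α : Type*} [DecidableEq α]

theorem card_powersetCard_le_two_mul_card_filter {k : ℕ} {U : Finset α} (hU : #U = 2 * k)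
    (p : Finset α → Prop) [DecidablePred p]
    (hp : ∀ Q ∈ U.powersetCard k, p Q ∨ p (U \ Q)) :
    #(U.powersetCard k) ≤ 2 * #((U.powersetCard k).filter p) := by
  set A := U.powersetCard k
  have compl_mem : ∀ Q ∈ A, U \ Q ∈ A := fun Q hQ => by
    obtain ⟨hQU, hQ⟩ := mem_powersetCard.1 hQ
    exact mem_powersetCard.2 ⟨sdiff_subset, by rw [card_sdiff_of_subset hQU]; omega⟩
  have compl_compl : ∀ Q ∈ A, U \ (U \ Q) = Q := fun Q hQ =>
    Finset.sdiff_sdiff_eq_self (mem_powersetCard.1 hQ).1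
  have card_filter_compl : #(A.filter fun Q => p (U \ Q)) = #(A.filter p) := by
    refine card_nbij' (U \ ·) (U \ ·) ?_ ?_ ?_ ?_ <;> intro Q hQ <;>
      simp only [coe_filter, Set.mem_ofPred_eq] at hQ ⊢ <;> obtain ⟨hQA, hpQ⟩ := hQ
    · exact ⟨compl_mem Q hQA, hpQ⟩
    · exact ⟨compl_mem Q hQA, by rwa [compl_compl Q hQA]⟩
    · exact compl_compl Q hQA
    · exact compl_compl Q hQA
  calc #A = #(A.filter fun Q => p Q ∨ p (U \ Q)) := by rw [filter_true_of_mem hp]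
    _ ≤ #(A.filter p) + #(A.filter fun Q => p (U \ Q)) := by
      rw [filter_or]; exact card_union_le _ _
    _ = 2 * #(A.filter p) := by rw [card_filter_compl]; ring

theorem card_erase_add_one_le_card_inter_add_card_inter {X P P' : Finset α} {i j : α}
    (hiX : i ∈ X) (hiP : i ∈ P) (hiP' : i ∈ P') (hcover : X.erase j ⊆ P ∪ P') :
    #(X.erase j) + 1 ≤ #(X ∩ P) + #(X ∩ P') := by
  rw [← card_union_add_card_inter, ← inter_union_distrib_left, ← inter_inter_distrib_left]
  exact add_le_add (card_le_card (subset_inter (erase_subset _ _) hcover))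
    (card_pos.2 ⟨i, mem_inter.2 ⟨hiX, mem_inter.2 ⟨hiP, hiP'⟩⟩⟩)

variable {n : ℕ} {S T : Finset α} {i j : α}

theorem two_mul_add_one_le_score_add_score (hS : #S = n) (hT : #T = n)
    (hi : i ∈ S ∩ T) (hj : j ∉ S ∩ T) {P P' : Finset α}
    (hiP : i ∈ P) (hiP' : i ∈ P') (hcover : ∀ x, x ≠ j → x ∈ P ∪ P') :
    2 * n + 1 ≤ (#(S ∩ P) + #(T ∩ P)) + (#(S ∩ P') + #(T ∩ P')) := by
  obtain ⟨hiS, hiT⟩ := mem_inter.1 hi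
  have cover : ∀ X : Finset α, X.erase j ⊆ P ∪ P' := fun X x hx => hcover x (ne_of_mem_erase hx)
  have hSP := card_erase_add_one_le_card_inter_add_card_inter hiS hiP hiP' (cover S)
  have hTP := card_erase_add_one_le_card_inter_add_card_inter hiT hiP hiP' (cover T)
  have hSj := pred_card_le_card_erase (s := S) (a := j)
  have hTj := pred_card_le_card_erase (s := T) (a := j)
  by_cases hjS : j ∈ S
  · rw [erase_eq_of_notMem fun hjT => hj (mem_inter.2 ⟨hjS, hjT⟩)] at hTP
    omega
  · rw [erase_eq_of_notMem hjS] at hSP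
    omega

theorem choose_le_two_mul_card_filter_score [Fintype α] {m : ℕ} (hα : Fintype.card α = 2 * (m + 1))
    (hS : #S = m + 1) (hT : #T = m + 1) (hi : i ∈ S ∩ T) (hj : j ∉ S ∩ T) :
    (2 * m).choose m ≤
      2 * #((univ.powersetCard (m + 1)).filter fun P => m + 1 + 1 ≤ #(S ∩ P) + #(T ∩ P)) := by
  have hij : i ≠ j := fun h => hj (h ▸ hi)
  set U : Finset α := univ \ {i, j}
  have hiU : i ∉ U := by simp [U]
  have hU : #U = 2 * m := by
    rw [card_sdiff_of_subset (subset_univ _), card_univ, hα, card_pair hij]; omega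
  have notMem : ∀ Q ∈ U.powersetCard m, i ∉ Q := fun Q hQ h =>
    hiU ((mem_powersetCard.1 hQ).1 h)
  have pair_good : ∀ Q ∈ U.powersetCard m,
      m + 2 ≤ #(S ∩ insert i Q) + #(T ∩ insert i Q) ∨
        m + 2 ≤ #(S ∩ insert i (U \ Q)) + #(T ∩ insert i (U \ Q)) := fun Q hQ => by
    have hQU := (mem_powersetCard.1 hQ).1
    have := two_mul_add_one_le_score_add_score hS hT hi hj (mem_insert_self i Q)
      (mem_insert_self i (U \ Q)) fun x hx => by
        by_cases hxQ : x ∈ Q <;> by_cases hxi : x = i <;> simp_all [U]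
    omega
  calc (2 * m).choose m = #(U.powersetCard m) := by rw [card_powersetCard, hU]
    _ ≤ 2 * #((U.powersetCard m).filter fun Q => m + 2 ≤ #(S ∩ insert i Q) + #(T ∩ insert i Q)) :=
      card_powersetCard_le_two_mul_card_filter hU _ pair_good
    _ ≤ _ := by
      refine Nat.mul_le_mul_left 2 (card_le_card_of_injOn (insert i) (fun Q hQ => ?_) ?_)
      · obtain ⟨hQ, hgood⟩ := mem_filter.1 (mem_coe.1 hQ)
        refine mem_filter.2 ⟨mem_powersetCard.2 ⟨subset_univ _, ?_⟩, hgood⟩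
        rw [card_insert_of_notMem (notMem Q hQ), (mem_powersetCard.1 hQ).2]
      · intro Q hQ Q' hQ' h
        rw [← erase_insert (notMem Q (mem_filter.1 hQ).1),
          ← erase_insert (notMem Q' (mem_filter.1 hQ').1), h]

end

/-- Let `S, T ⊆ [2n]` with `|S| = |T| = n`, `i ∈ S ∩ T`, and
`j ∉ S ∩ T`. If `P` is a uniform random `n`-subset of `[2n]`, then
`P[|S ∩ P| + |T ∩ P| ≥ n + 1] > 1/8`. -/
theorem random_subset_intersection (n : ℕ) (S T : Finset (Fin (2 * n)))
    (hS : S.card = n) (hT : T.card = n)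
    (i j : Fin (2 * n)) (hi : i ∈ S ∩ T) (hj : j ∉ S ∩ T) :
    (1 : ℝ) / 8 <
      ((((Finset.univ : Finset (Fin (2 * n))).powersetCard n).filter
          (fun P => n + 1 ≤ (S ∩ P).card + (T ∩ P).card)).card : ℝ) /
        (((Finset.univ : Finset (Fin (2 * n))).powersetCard n).card : ℝ) := by
  obtain ⟨m, rfl⟩ : ∃ m, n = m + 1 :=
    Nat.exists_eq_add_one.2 (hS ▸ card_pos.2 ⟨i, (mem_inter.1 hi).1⟩)
  have hgood := choose_le_two_mul_card_filter_score (Fintype.card_fin _) hS hT hi hj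
  have hbinom := Nat.centralBinom_succ_lt_four_mul m
  rw [Nat.centralBinom_eq_two_mul_choose, Nat.centralBinom_eq_two_mul_choose] at hbinom
  rw [card_powersetCard, card_univ, Fintype.card_fin,
    div_lt_div_iff₀ (by norm_num) (by exact_mod_cast Nat.choose_pos (by omega))]
  exact_mod_cast (by omega)
end

section
/- Let S, T ⊆ [2n] with |S| = |T| = n, let i ∈ S ∩ T, j ∉ S ∩ T with i ≠ j, and let Q ⊆ [2n] \ {i, j} with |Q| = n − 1. Then at least one of the four sets Q∪{i}, Q∪{j}, ([2n] \ Q) \ {j}, ([2n] \ Q) \ {i} — each of size n — satisfies |S ∩ P| + |T ∩ P| ≥ n + 1. -/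
open Finset

section PairCount

variable {α : Type*} [DecidableEq α]

theorem card_inter_insert_of_mem {U Q : Finset α} {a : α} (haU : a ∈ U) (haQ : a ∉ Q) :
    #(U ∩ insert a Q) = #(U ∩ Q) + 1 := by
  rw [inter_insert_of_mem haU, card_insert_of_notMem fun h ↦ haQ (mem_inter.1 h).2]

theorem card_inter_insert_le (U Q : Finset α) (a : α) :
    #(U ∩ insert a Q) ≤ #(U ∩ Q) + 1 := by
  by_cases haU : a ∈ U
  · rw [inter_insert_of_mem haU]
    exact card_insert_le _ _
  · rw [inter_insert_of_notMem haU]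
    exact Nat.le_succ _

theorem card_inter_insert_add_card_inter_insert_of_mem_inter {S T Q : Finset α} {a : α}
    (ha : a ∈ S ∩ T) (haQ : a ∉ Q) :
    #(S ∩ insert a Q) + #(T ∩ insert a Q) = #(S ∩ Q) + #(T ∩ Q) + 2 := by
  rw [card_inter_insert_of_mem (mem_inter.1 ha).1 haQ,
    card_inter_insert_of_mem (mem_inter.1 ha).2 haQ]
  ring

theorem card_inter_insert_add_card_inter_insert_le_of_notMem_inter {S T : Finset α}
    (Q : Finset α) {a : α} (ha : a ∉ S ∩ T) :
    #(S ∩ insert a Q) + #(T ∩ insert a Q) ≤ #(S ∩ Q) + #(T ∩ Q) + 1 := by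
  have hS := card_inter_insert_le S Q a
  have hT := card_inter_insert_le T Q a
  rcases not_and_or.1 (mem_inter.not.1 ha) with haS | haT
  · rw [inter_insert_of_notMem haS] at hS ⊢
    omega
  · rw [inter_insert_of_notMem haT] at hT ⊢
    omega

theorem card_inter_univ_sdiff_add_card_inter [Fintype α] (U P : Finset α) :
    #(U ∩ (univ \ P)) + #(U ∩ P) = #U := by
  rw [← inter_sdiff_assoc, inter_univ]
  exact card_sdiff_add_card_inter U P

end PairCount

theorem four_sets_one_good_general (n : ℕ) (hn : 1 ≤ n) (S T : Finset (Fin (2 * n)))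
    (hS : S.card = n) (hT : T.card = n)
    (i j : Fin (2 * n)) (hi : i ∈ S ∩ T) (hj : j ∉ S ∩ T)
    (Q : Finset (Fin (2 * n))) (hQ : Q ⊆ Finset.univ \ {i, j}) (hQcard : Q.card = n - 1) :
    ((insert i Q).card = n ∧ (insert j Q).card = n ∧
      ((Finset.univ \ Q) \ {j}).card = n ∧ ((Finset.univ \ Q) \ {i}).card = n) ∧
    (n + 1 ≤ (S ∩ insert i Q).card + (T ∩ insert i Q).card ∨
     n + 1 ≤ (S ∩ insert j Q).card + (T ∩ insert j Q).card ∨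
     n + 1 ≤ (S ∩ ((Finset.univ \ Q) \ {j})).card + (T ∩ ((Finset.univ \ Q) \ {j})).card ∨
     n + 1 ≤ (S ∩ ((Finset.univ \ Q) \ {i})).card + (T ∩ ((Finset.univ \ Q) \ {i})).card) := by
  have hiQ : i ∉ Q := fun h ↦ by simpa using hQ h
  have hjQ : j ∉ Q := fun h ↦ by simpa using hQ h
  have hcompl (a : Fin (2 * n)) : (univ \ Q) \ {a} = univ \ insert a Q := by
    rw [sdiff_sdiff_left, insert_eq, union_comm]
    rfl
  have hsize {a : Fin (2 * n)} (ha : a ∉ Q) : #(insert a Q) = n ∧ #(univ \ insert a Q) = n := by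
    rw [card_univ_sdiff, card_insert_of_notMem ha, Fintype.card_fin, hQcard]
    omega
  simp only [hcompl]
  refine ⟨⟨(hsize hiQ).1, (hsize hjQ).1, (hsize hjQ).2, (hsize hiQ).2⟩, ?_⟩
  by_cases hgood : n + 1 ≤ #(S ∩ insert i Q) + #(T ∩ insert i Q)
  · exact Or.inl hgood
  -- adding `i` to `Q` gains 2 and adding `j` at most 1, so if `insert i Q` scores at most `n`,
  -- then `insert j Q` scores at most `n - 1` and its complement at least `n + 1`
  right; right; left
  have hgain_i := card_inter_insert_add_card_inter_insert_of_mem_inter hi hiQ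
  have hgain_j := card_inter_insert_add_card_inter_insert_le_of_notMem_inter Q hj
  have hSc := card_inter_univ_sdiff_add_card_inter S (insert j Q)
  have hTc := card_inter_univ_sdiff_add_card_inter T (insert j Q)
  omega

/-- With `S, T ⊆ [2n]`, `|S| = |T| = n`, `i ∈ S ∩ T`, `j ∉ S ∩ T`,
`i ≠ j`, and `Q ⊆ [2n] \ {i,j}` with `|Q| = n − 1`, at least one of the four
size-`n` sets `Q∪{i}`, `Q∪{j}`, `Qᶜ \ {j}`, `Qᶜ \ {i}` satisfies
`|S ∩ P| + |T ∩ P| ≥ n + 1`. -/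
theorem four_sets_one_good (n : ℕ) (hn : 1 ≤ n) (S T : Finset (Fin (2 * n)))
    (hS : S.card = n) (hT : T.card = n)
    (i j : Fin (2 * n)) (hi : i ∈ S ∩ T) (hj : j ∉ S ∩ T) (hij : i ≠ j)
    (Q : Finset (Fin (2 * n))) (hQ : Q ⊆ Finset.univ \ {i, j}) (hQcard : Q.card = n - 1) :
    ((insert i Q).card = n ∧ (insert j Q).card = n ∧
      ((Finset.univ \ Q) \ {j}).card = n ∧ ((Finset.univ \ Q) \ {i}).card = n) ∧
    (n + 1 ≤ (S ∩ insert i Q).card + (T ∩ insert i Q).card ∨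
     n + 1 ≤ (S ∩ insert j Q).card + (T ∩ insert j Q).card ∨
     n + 1 ≤ (S ∩ ((Finset.univ \ Q) \ {j})).card + (T ∩ ((Finset.univ \ Q) \ {j})).card ∨
     n + 1 ≤ (S ∩ ((Finset.univ \ Q) \ {i})).card + (T ∩ ((Finset.univ \ Q) \ {i})).card) :=
  four_sets_one_good_general n hn S T hS hT i j hi hj Q hQ hQcard
end

section
/- Let p > 0, φ ∈ (0, 1/2^{1/p}) (so that (2φ)^p < 1), and set b = (1 − (2φ)^p)^{−1/p}. Then for all integers 1 ≤ i ≤ s: φ^p · ∑_{j=i}^{s} ⌈b^{s−j}⌉^p < b^{p(s−i)}. -/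
open Finset

/-! Since `⌈v⌉ < 2v` for `v > 1/2`, each term satisfies `⌈b^k⌉^p < 2^p t^k` with `t = b^p`, so the
left side is below `(2φ)^p ∑_{k ≤ s-i} t^k`. The choice of `b` makes `(2φ)^p = 1 - t⁻¹`, and
`(1 - t⁻¹) ∑_{k ≤ n} t^k = t^n - t⁻¹ < t^n`. -/

lemma Real.ceil_rpow_lt_two_rpow_mul_rpow {x p : ℝ} (hx : 2⁻¹ < x) (hp : 0 < p) :
    (⌈x⌉ : ℝ) ^ p < 2 ^ p * x ^ p := by
  have hceil_pos : (0 : ℝ) < ⌈x⌉ := by exact_mod_cast Int.ceil_pos.2 (by linarith)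
  rw [← Real.mul_rpow zero_le_two (by linarith)]
  exact Real.rpow_lt_rpow hceil_pos.le (Int.ceil_lt_two_mul hx) hp

lemma Finset.sum_Icc_sub_eq_sum_range {M : Type*} [AddCommMonoid M] (f : ℕ → M) {i s : ℕ}
    (h : i ≤ s) : ∑ j ∈ Icc i s, f (s - j) = ∑ k ∈ range (s - i + 1), f k := by
  refine sum_nbij' (fun j ↦ s - j) (fun k ↦ s - k) ?_ ?_ ?_ ?_ (fun _ _ ↦ rfl) <;>
    intro j hj <;> simp only [mem_Icc, mem_range] at hj ⊢ <;> omega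

lemma one_sub_inv_mul_geom_sum_lt {t : ℝ} (ht : 0 < t) (n : ℕ) :
    (1 - t⁻¹) * ∑ k ∈ range (n + 1), t ^ k < t ^ n := by
  have htelescope : (1 - t⁻¹) * ∑ k ∈ range (n + 1), t ^ k = t ^ n - t⁻¹ := by
    rw [show 1 - t⁻¹ = t⁻¹ * (t - 1) by field_simp, mul_assoc, mul_comm (t - 1),
      geom_sum_mul, pow_succ]
    field_simp
  rw [htelescope]
  linarith [inv_pos.2 ht]

theorem heavy_hitter_geometric_general (p φ b : ℝ) (hp : 0 < p)
    (hφ0 : 0 < φ) (h2φ : (2 * φ) ^ p < 1)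
    (hb : b = (1 - (2 * φ) ^ p) ^ (-(1 / p)))
    (i s : ℕ) (his : i ≤ s) :
    φ ^ p * ∑ j ∈ Finset.Icc i s, ((⌈b ^ (s - j)⌉ : ℝ)) ^ p
      < b ^ (p * ((s : ℝ) - i)) := by
  have hbase : 0 < 1 - (2 * φ) ^ p := sub_pos.2 h2φ
  have hb0 : 0 < b := hb ▸ Real.rpow_pos_of_pos hbase _
  have hb1 : 1 ≤ b := hb ▸ Real.one_le_rpow_of_pos_of_le_one_of_nonpos hbase
    (by linarith [Real.rpow_nonneg (by linarith : (0 : ℝ) ≤ 2 * φ) p])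
    (neg_nonpos.2 (by positivity))
  have ht : b ^ p = (1 - (2 * φ) ^ p)⁻¹ := by
    rw [hb, Real.rpow_neg hbase.le, Real.inv_rpow (by positivity), one_div,
      Real.rpow_inv_rpow hbase.le hp.ne']
  set t := b ^ p
  have hφt : φ ^ p * 2 ^ p = 1 - t⁻¹ := by
    rw [ht, inv_inv, ← Real.mul_rpow hφ0.le zero_le_two, mul_comm φ]
    ring
  have hterm (j : ℕ) : (⌈b ^ (s - j)⌉ : ℝ) ^ p < 2 ^ p * t ^ (s - j) := by
    rw [Real.rpow_pow_comm hb0.le]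
    exact Real.ceil_rpow_lt_two_rpow_mul_rpow
      (by linarith [one_le_pow₀ (n := s - j) hb1]) hp
  calc φ ^ p * ∑ j ∈ Icc i s, (⌈b ^ (s - j)⌉ : ℝ) ^ p
      < φ ^ p * ∑ j ∈ Icc i s, 2 ^ p * t ^ (s - j) :=
        mul_lt_mul_of_pos_left (sum_lt_sum_of_nonempty (nonempty_Icc.2 his) fun j _ ↦ hterm j)
          (Real.rpow_pos_of_pos hφ0 p)
    _ = (1 - t⁻¹) * ∑ k ∈ range (s - i + 1), t ^ k := by
        rw [← mul_sum, ← mul_assoc, hφt, sum_Icc_sub_eq_sum_range (t ^ ·) his]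
    _ < t ^ (s - i) := one_sub_inv_mul_geom_sum_lt (Real.rpow_pos_of_pos hb0 p) _
    _ = b ^ (p * ((s : ℝ) - i)) := by
        rw [← Nat.cast_sub his, Real.rpow_mul_natCast hb0.le]

/-- For `p > 0`, `φ ∈ (0, 1/2^{1/p})` with `(2φ)^p < 1` and
`b = (1 − (2φ)^p)^{−1/p}`, for all `1 ≤ i ≤ s`:
`φ^p · ∑_{j=i}^{s} ⌈b^{s−j}⌉^p < b^{p(s−i)}`. -/
theorem heavy_hitter_geometric (p φ b : ℝ) (hp : 0 < p)
    (hφ0 : 0 < φ) (hφ1 : φ < (1 / 2 : ℝ) ^ (1 / p)) (h2φ : (2 * φ) ^ p < 1)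
    (hb : b = (1 - (2 * φ) ^ p) ^ (-(1 / p)))
    (i s : ℕ) (hi : 1 ≤ i) (his : i ≤ s) :
    φ ^ p * ∑ j ∈ Finset.Icc i s, ((⌈b ^ (s - j)⌉ : ℝ)) ^ p
      < b ^ (p * ((s : ℝ) - i)) :=
  heavy_hitter_geometric_general p φ b hp hφ0 h2φ hb i s his
end
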